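/- For any h, k ≥ 2, every deterministic thrifty k-way branching program solving the Tree Evaluation Problem on the complete binary tree of height h has at least k^h states. -/

import Mathlib

/-- A deterministic `k`-way branching program with variables `Var` and outputs `Out`.
States are either query states (labeled by `query`, with `k` out-edges given by `next`)
or output states (where `out` is `some o`). -/
structure BP (Var : Type) (k : ℕ) (Out : Type) where
  State : Type
  [finState : Fintype State]
  start : State
  query : State → Var
  next : State → Fin k → State
  out : State → Option Out

namespace BP

variable {Var Out : Type} {k : ℕ}

/-- The number of states. -/
noncomputable def size (B : BP Var k Out) : ℕ := @Fintype.card B.State B.finState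

/-- The computation path of input `I`. -/
def path (B : BP Var k Out) (I : Var → Fin k) : ℕ → B.State
  | 0 => B.start
  | t + 1 => B.next (B.path I t) (I (B.query (B.path I t)))

/-- The computation of `I` is still running at time `t`: no output state was reached earlier. -/
def VisitsAt (B : BP Var k Out) (I : Var → Fin k) (t : ℕ) : Prop :=
  ∀ s < t, B.out (B.path I s) = none

/-- State `q` is on the computation path of input `I`. -/
def Visits (B : BP Var k Out) (I : Var → Fin k) (q : B.State) : Prop :=
  ∃ t, B.VisitsAt I t ∧ B.path I t = q

/-- `B` computes the function `g`. -/
def Computes (B : BP Var k Out) (g : (Var → Fin k) → Out) : Prop :=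
  ∀ I, ∃ t, B.VisitsAt I t ∧ B.out (B.path I t) = some (g I)

end BP
/-- A connected rooted dag: nodes `Fin n`, with `child v u` meaning there is an arc from `v`
to `u` (so `v` is a child of `u`).  The relation is well-founded (the dag is acyclic), the
root is the unique node of out-degree `0` (every other node has a parent, which also makes
the dag connected). -/
structure RootedDag where
  n : ℕ
  child : Fin n → Fin n → Prop
  wf : WellFounded child
  root : Fin n
  root_no_parent : ∀ u, ¬ child root u
  root_unique : ∀ u, u ≠ root → ∃ w, child u w

namespace RootedDag

/-- A leaf is a node of in-degree `0`. -/
def IsLeaf (G : RootedDag) (u : Fin G.n) : Prop := ∀ v, ¬ G.child v u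

/-- The input variables of the dag evaluation problem `DE^G_k`: a leaf variable `l_u` for each
leaf `u`, and a variable `f_u(a⃗)` for each internal node `u` and each assignment `a⃗` of values
in `[k]` to the children of `u`. -/
def Var (G : RootedDag) (k : ℕ) : Type :=
  {u : Fin G.n // G.IsLeaf u} ⊕
    (Σ _u : {u : Fin G.n // ¬ G.IsLeaf u}, ({v : Fin G.n // G.child v _u.1} → Fin k))

/-- The value of each node of `G` under input `I`: leaves take their `l` value, and an internal
node applies its function to the values of its children. -/
noncomputable def val (G : RootedDag) {k : ℕ} (I : G.Var k → Fin k) : Fin G.n → Fin k :=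
  WellFounded.fix (C := fun _ => Fin k) G.wf fun u ih =>
    letI := Classical.dec (G.IsLeaf u)
    if h : G.IsLeaf u then I (Sum.inl ⟨u, h⟩)
    else I (Sum.inr ⟨⟨u, h⟩, fun v => ih v.1 v.2⟩)

/-- `B` solves `DE^G_k`: on every input it halts with output `true` iff the value of the
root is `1` (the first element of `[k]`). -/
def SolvesDE (G : RootedDag) {k : ℕ} (hk : 0 < k) (B : BP (G.Var k) k Bool) : Prop :=
  B.Computes fun I => decide (G.val I G.root = ⟨0, hk⟩)

/-- `B` is thrifty: whenever a state querying `f_u(a⃗)` is visited by input `I`, then `a⃗` is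
exactly the tuple of values of the children of `u` under `I`. -/
def Thrifty (G : RootedDag) {k : ℕ} (B : BP (G.Var k) k Bool) : Prop :=
  ∀ (I : G.Var k → Fin k) (q : B.State) (u : {u : Fin G.n // ¬ G.IsLeaf u})
    (a : {v : Fin G.n // G.child v u.1} → Fin k),
    B.Visits I q → B.query q = Sum.inr ⟨u, a⟩ → ∀ v, a v = G.val I v.1

end RootedDag

/-!
A thrifty program queries at a node `u` only `l_u` or `f_u` applied to the true values of the
children, so its computation on an input `I` describes a black pebbling of the tree: `u` carries
a pebble while its value has been computed and is still going to be read by the parent. As the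
pebbling cost of the tree of height `h` is `h`, at some time `τ(I)` the values of `h` nodes are
held in this sense. Overwrite the `h` variables that computed them by any `c ∈ [k]^h`. From the
state at time `τ(I)` and the overwritten input one recovers `I` by replaying the computation:
each overwritten variable is queried only after the query to its parent has revealed its true
value. So `(c, I) ↦ (state, overwritten input)` is injective, and there are at least `k^h`
states.
-/

open Finset

lemma Nat.exists_not_and_succ {P : ℕ → Prop} {a b : ℕ} (hab : a ≤ b) (ha : ¬ P a) (hb : P b) :
    ∃ t, a ≤ t ∧ t < b ∧ ¬ P t ∧ P (t + 1) := by
  induction b, hab using Nat.le_induction with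
  | base => exact absurd hb ha
  | succ b hab ih =>
    by_cases hPb : P b
    · obtain ⟨t, hat, htb, ht⟩ := ih hPb
      exact ⟨t, hat, by omega, ht⟩
    · exact ⟨b, hab, by omega, hPb, hb⟩

lemma Nat.exists_last {P : ℕ → Prop} {a b : ℕ} (hab : a ≤ b) (ha : P a) :
    ∃ t, a ≤ t ∧ t ≤ b ∧ P t ∧ ∀ s, t < s → s ≤ b → ¬ P s := by
  classical
  exact ⟨Nat.findGreatest P b, Nat.le_findGreatest hab ha, Nat.findGreatest_le b,
    Nat.findGreatest_spec hab ha, fun _ hs hsb => Nat.findGreatest_is_greatest hs hsb⟩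

lemma Finset.add_one_le_card_filter_or {α : Type*} [DecidableEq α] {s : Finset α}
    {P Q : α → Prop} [DecidablePred P] [DecidablePred Q] {n : ℕ} {a : α} (hP : n ≤ #{x ∈ s | P x})
    (ha : a ∈ s) (hQa : Q a) (hPQ : ∀ x, P x → ¬ Q x) :
    n + 1 ≤ #{x ∈ s | P x ∨ Q x} := by
  have ha' : a ∉ {x ∈ s | P x} := fun h => hPQ a (mem_filter.1 h).2 hQa
  calc n + 1 ≤ #(insert a {x ∈ s | P x}) := by rw [card_insert_of_notMem ha']; omega
    _ ≤ #{x ∈ s | P x ∨ Q x} := card_le_card <| insert_subset (by simp [ha, hQa])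
        fun x hx => by simp only [mem_filter] at hx ⊢; exact ⟨hx.1, Or.inl hx.2⟩

namespace Pebbling

/-- `q` lies in the subtree of height `m` rooted at `p`, in heap numbering (the children of `q`
are `2q` and `2q+1`). -/
def InSubtree (m p q : ℕ) : Prop := ∃ d < m, q / 2 ^ d = p

instance (m p : ℕ) : DecidablePred (InSubtree m p) :=
  fun q => inferInstanceAs (Decidable (∃ d < m, q / 2 ^ d = p))

lemma inSubtree_self {m : ℕ} (hm : 0 < m) (p : ℕ) : InSubtree m p p := ⟨0, hm, by simp⟩

lemma InSubtree.of_child {m p c q : ℕ} (hc : c / 2 = p) (hq : InSubtree m c q) :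
    InSubtree (m + 1) p q := by
  obtain ⟨d, hd, rfl⟩ := hq
  exact ⟨d + 1, by omega, by rw [pow_succ, ← Nat.div_div_eq_div_mul, hc]⟩

lemma InSubtree.two_mul_lt {m p q : ℕ} (hq : InSubtree m p q) : 2 * q < (p + 1) * 2 ^ m := by
  obtain ⟨d, hd, rfl⟩ := hq
  have hq : q < (q / 2 ^ d + 1) * 2 ^ d :=
    Nat.lt_mul_of_div_lt (Nat.lt_succ_self _) (by positivity)
  calc 2 * q < (q / 2 ^ d + 1) * 2 ^ (d + 1) := by rw [pow_succ]; nlinarith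
    _ ≤ (q / 2 ^ d + 1) * 2 ^ m := Nat.mul_le_mul_left _ (Nat.pow_le_pow_right two_pos hd)

lemma not_inSubtree_of_inSubtree {m m' p q : ℕ} (hp : 0 < p) (h : InSubtree m (2 * p) q) :
    ¬ InSubtree m' (2 * p + 1) q := by
  rintro ⟨e, -, he⟩
  obtain ⟨d, -, hd⟩ := h
  have shift : ∀ i j, i ≤ j → q / 2 ^ j = q / 2 ^ i / 2 ^ (j - i) := fun i j hij => by
    rw [Nat.div_div_eq_div_mul, ← pow_add, Nat.add_sub_cancel' hij]
  rcases lt_trichotomy d e with hde | rfl | hde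
  · have := Nat.div_le_div_left (Nat.le_self_pow (by omega : e - d ≠ 0) 2) two_pos (a := 2 * p)
    rw [shift d e hde.le, hd] at he
    omega
  · omega
  · have := Nat.div_le_div_left (Nat.le_self_pow (by omega : d - e ≠ 0) 2) two_pos
      (a := 2 * p + 1)
    rw [shift e d hde.le, he] at hd
    omega

/-- The black pebbling placement rule, imposed on the internal nodes of the subtree of height
`m + 1` at `p`. -/
def IsLegal (C : ℕ → Finset ℕ) (m p : ℕ) : Prop :=
  ∀ t q, InSubtree m p q → q ∉ C t → q ∈ C (t + 1) → 2 * q ∈ C t ∧ 2 * q + 1 ∈ C t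

lemma IsLegal.of_child {C : ℕ → Finset ℕ} {m p c : ℕ} (hc : c / 2 = p)
    (hC : IsLegal C (m + 1) p) : IsLegal C m c :=
  fun t q hq => hC t q (hq.of_child hc)

/-- The black pebbling cost of the subtree of height `m + 1` at any node is at least `m + 1`. -/
def PebblesNeeded (C : ℕ → Finset ℕ) (m : ℕ) : Prop :=
  ∀ ⦃p a b⦄, 0 < p → IsLegal C m p → a ≤ b → (∀ q, InSubtree (m + 1) p q → q ∉ C a) →
    p ∈ C b → ∃ τ, a < τ ∧ τ ≤ b ∧ m + 1 ≤ #{q ∈ C τ | InSubtree (m + 1) p q}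

variable {C : ℕ → Finset ℕ} {m : ℕ}

lemma exists_card_siblings_ge_of_empty (hC : PebblesNeeded C m) {c c' ts b : ℕ} (hc : 0 < c)
    (hleg : IsLegal C m c) (hdisj : ∀ q, InSubtree (m + 1) c q → ¬ InSubtree (m + 1) c' q)
    (hts : ts ≤ b) (hempty : ∀ q, InSubtree (m + 1) c q → q ∉ C ts) (hb : c ∈ C b)
    (hc' : ∀ t, ts < t → t ≤ b → ∃ q ∈ C t, InSubtree (m + 1) c' q) :
    ∃ τ, ts < τ ∧ τ ≤ b ∧
      m + 2 ≤ #{q ∈ C τ | InSubtree (m + 1) c q ∨ InSubtree (m + 1) c' q} := by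
  obtain ⟨τ, htsτ, hτb, hcard⟩ := hC hc hleg hts hempty hb
  obtain ⟨q', hq', hq'c'⟩ := hc' τ htsτ hτb
  exact ⟨τ, htsτ, hτb, add_one_le_card_filter_or hcard hq' hq'c' hdisj⟩

/-- While the child whose subtree emptied last is being pebbled with `m + 1` pebbles, the
subtree of the other child holds at least one more. -/
lemma exists_card_children_ge (hC : PebblesNeeded C m) {p a b : ℕ} (hp : 0 < p)
    (hleg : IsLegal C m (2 * p)) (hleg' : IsLegal C m (2 * p + 1)) (hab : a ≤ b)
    (ha : ∀ q, InSubtree (m + 1) (2 * p) q ∨ InSubtree (m + 1) (2 * p + 1) q → q ∉ C a)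
    (hb : 2 * p ∈ C b) (hb' : 2 * p + 1 ∈ C b) :
    ∃ τ, a < τ ∧ τ ≤ b ∧
      m + 2 ≤ #{q ∈ C τ | InSubtree (m + 1) (2 * p) q ∨ InSubtree (m + 1) (2 * p + 1) q} := by
  obtain ⟨ts, hats, htsb, hempty, hlast⟩ := Nat.exists_last
    (P := fun t => (∀ q, InSubtree (m + 1) (2 * p) q → q ∉ C t) ∨
      ∀ q, InSubtree (m + 1) (2 * p + 1) q → q ∉ C t) hab (Or.inl fun q hq => ha q (Or.inl hq))
  have hboth : ∀ t, ts < t → t ≤ b → (∃ q ∈ C t, InSubtree (m + 1) (2 * p) q) ∧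
      ∃ q ∈ C t, InSubtree (m + 1) (2 * p + 1) q := fun t h1 h2 => by
    simpa only [not_or, not_forall, not_not, exists_prop, and_comm] using hlast t h1 h2
  have hdisj := fun q => not_inSubtree_of_inSubtree (m := m + 1) (m' := m + 1) (q := q) hp
  rcases hempty with hempty | hempty
  · obtain ⟨τ, h1, h2, h3⟩ := exists_card_siblings_ge_of_empty hC (by omega) hleg hdisj htsb
      hempty hb fun t h1 h2 => (hboth t h1 h2).2
    exact ⟨τ, by omega, h2, h3⟩
  · obtain ⟨τ, h1, h2, h3⟩ := exists_card_siblings_ge_of_empty hC (by omega) hleg'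
      (fun q hq h => hdisj q h hq) htsb hempty hb' fun t h1 h2 => (hboth t h1 h2).1
    simp only [or_comm (a := InSubtree (m + 1) (2 * p + 1) _)] at h3
    exact ⟨τ, by omega, h2, h3⟩

theorem pebblesNeeded (C : ℕ → Finset ℕ) (m : ℕ) : PebblesNeeded C m := by
  induction m with
  | zero =>
    intro p a b _ _ hab ha hb
    have hpa := ha p (inSubtree_self one_pos p)
    refine ⟨b, lt_of_le_of_ne hab (by rintro rfl; exact hpa hb), le_rfl, card_pos.2 ⟨p, ?_⟩⟩
    exact mem_filter.2 ⟨hb, inSubtree_self one_pos p⟩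
  | succ m ih =>
    intro p a b hp hleg hab ha hb
    obtain ⟨t, hat, htb, hpt, hpt1⟩ :=
      Nat.exists_not_and_succ (P := fun t => p ∈ C t) hab (ha p (inSubtree_self (by omega) p)) hb
    have hc : 2 * p / 2 = p := by omega
    have hc' : (2 * p + 1) / 2 = p := by omega
    obtain ⟨hb, hb'⟩ := hleg t p (inSubtree_self (by omega) p) hpt hpt1
    obtain ⟨τ, haτ, hτt, hcard⟩ := exists_card_children_ge ih hp (hleg.of_child hc)
      (hleg.of_child hc') hat
      (fun q hq => ha q (hq.elim (InSubtree.of_child hc) (InSubtree.of_child hc'))) hb hb'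
    refine ⟨τ, haτ, by omega, hcard.trans (card_le_card fun q hq => ?_)⟩
    simp only [mem_filter] at hq ⊢
    exact ⟨hq.1, hq.2.elim (InSubtree.of_child hc) (InSubtree.of_child hc')⟩

end Pebbling

namespace BP

variable {Var Out : Type} {k : ℕ} (B : BP Var k Out)

def HaltsAt (I : Var → Fin k) (T : ℕ) : Prop :=
  B.VisitsAt I T ∧ (B.out (B.path I T)).isSome

variable {B} {I I' : Var → Fin k}

lemma VisitsAt.mono {s t : ℕ} (h : B.VisitsAt I t) (hst : s ≤ t) : B.VisitsAt I s :=
  fun r hr => h r (by omega)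

lemma VisitsAt.visits {t : ℕ} (h : B.VisitsAt I t) : B.Visits I (B.path I t) := ⟨t, h, rfl⟩

lemma path_eq_of_forall_lt {t : ℕ}
    (h : ∀ s < t, I' (B.query (B.path I s)) = I (B.query (B.path I s))) :
    ∀ s ≤ t, B.path I' s = B.path I s := by
  intro s hs
  induction s with
  | zero => rfl
  | succ s ih =>
    have hs' := ih (by omega)
    simp only [path, hs', h s (by omega)]

lemma path_update_eq [DecidableEq Var] {t : ℕ} {x : Var} (c : Fin k)
    (hx : ∀ s < t, B.query (B.path I s) ≠ x) :
    ∀ s ≤ t, B.path (Function.update I x c) s = B.path I s :=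
  path_eq_of_forall_lt fun s hs => Function.update_of_ne (hx s hs) c I

lemma VisitsAt.of_path_eq {t : ℕ} (h : B.VisitsAt I t)
    (hpath : ∀ s ≤ t, B.path I' s = B.path I s) : B.VisitsAt I' t :=
  fun s hs => hpath s hs.le ▸ h s hs

lemma HaltsAt.path_ne {T t s : ℕ} (hT : B.HaltsAt I T) (ht : B.VisitsAt I' t) (hs : s < t) :
    B.path I' s ≠ B.path I T := fun heq => by
  simpa [← heq, ht s hs] using hT.2

lemma HaltsAt.unique {T T' : ℕ} (hT : B.HaltsAt I T) (hT' : B.HaltsAt I T') : T = T' := by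
  by_contra hne
  rcases Nat.lt_or_gt_of_ne hne with hlt | hlt
  · exact hT.path_ne hT'.1 hlt rfl
  · exact hT'.path_ne hT.1 hlt rfl

lemma path_add_eq_of_forall {τ τ' n : ℕ} (h0 : B.path I τ = B.path I' τ')
    (hstep : ∀ s < n, (∀ j ≤ s, B.path I (τ + j) = B.path I' (τ' + j)) →
      I (B.query (B.path I (τ + s))) = I' (B.query (B.path I (τ + s)))) :
    ∀ j ≤ n, B.path I (τ + j) = B.path I' (τ' + j) := by
  induction n with
  | zero => intro j hj; rwa [Nat.le_zero.1 hj]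
  | succ n ih =>
    have ih := ih fun s hs => hstep s (by omega)
    intro j hj
    rcases Nat.lt_or_ge j (n + 1) with hj' | hj'
    · exact ih j (by omega)
    · obtain rfl : j = n + 1 := by omega
      have hn := ih n le_rfl
      show B.next (B.path I (τ + n)) (I (B.query (B.path I (τ + n)))) =
        B.next (B.path I' (τ' + n)) (I' (B.query (B.path I' (τ' + n))))
      rw [hstep n n.lt_succ_self ih, hn]

lemma Computes.exists_haltsAt {g : (Var → Fin k) → Out} (hB : B.Computes g) (I : Var → Fin k) :
    ∃ T, B.HaltsAt I T := by
  obtain ⟨T, hT, hout⟩ := hB I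
  exact ⟨T, hT, by simp [hout]⟩

end BP

lemma pow_le_card_of_injective {α β : Type*} [Finite α] [Finite β] [Nonempty β] {h k : ℕ}
    {F : (Fin h → Fin k) × β → α × β} (hF : Function.Injective F) : k ^ h ≤ Nat.card α := by
  have hcard := Nat.card_le_card_of_injective F hF
  rw [Nat.card_prod, Nat.card_prod, Nat.card_fun, Nat.card_fin, Nat.card_fin] at hcard
  exact Nat.le_of_mul_le_mul_right hcard Nat.card_pos

namespace RootedDag

open Relation

variable {G : RootedDag} {k : ℕ} {I I' : G.Var k → Fin k}

def nodeOf : G.Var k → Fin G.n := Sum.elim Subtype.val fun x => x.1.1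

/-- The only variable at `u` that a thrifty program queries on input `I`. -/
noncomputable def thriftyVar (G : RootedDag) (I : G.Var k → Fin k) (u : Fin G.n) : G.Var k :=
  letI := Classical.dec (G.IsLeaf u)
  if hu : G.IsLeaf u then Sum.inl ⟨u, hu⟩ else Sum.inr ⟨⟨u, hu⟩, fun v => G.val I v.1⟩

lemma thriftyVar_of_isLeaf (I : G.Var k → Fin k) {u : Fin G.n} (hu : G.IsLeaf u) :
    G.thriftyVar I u = Sum.inl ⟨u, hu⟩ := dif_pos hu

lemma thriftyVar_of_not_isLeaf (I : G.Var k → Fin k) {u : Fin G.n} (hu : ¬ G.IsLeaf u) :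
    G.thriftyVar I u = Sum.inr ⟨⟨u, hu⟩, fun v => G.val I v.1⟩ := dif_neg hu

@[simp]
lemma nodeOf_thriftyVar (I : G.Var k → Fin k) (u : Fin G.n) : nodeOf (G.thriftyVar I u) = u := by
  by_cases hu : G.IsLeaf u
  · rw [thriftyVar_of_isLeaf I hu]; rfl
  · rw [thriftyVar_of_not_isLeaf I hu]; rfl

lemma val_eq_apply_thriftyVar (I : G.Var k → Fin k) (u : Fin G.n) :
    G.val I u = I (G.thriftyVar I u) := by
  by_cases hu : G.IsLeaf u
  · rw [thriftyVar_of_isLeaf I hu, val, WellFounded.fix_eq]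
    exact dif_pos hu
  · rw [thriftyVar_of_not_isLeaf I hu]
    conv_lhs => rw [val, WellFounded.fix_eq]
    exact dif_neg hu

lemma thriftyVar_congr {u : Fin G.n} (h : ∀ v, G.child v u → G.val I v = G.val I' v) :
    G.thriftyVar I u = G.thriftyVar I' u := by
  by_cases hu : G.IsLeaf u
  · rw [thriftyVar_of_isLeaf I hu, thriftyVar_of_isLeaf I' hu]
  · rw [thriftyVar_of_not_isLeaf I hu, thriftyVar_of_not_isLeaf I' hu]
    rw [show (fun v : {v // G.child v u} => G.val I v.1) = fun v => G.val I' v.1 from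
      funext fun v => h v.1 v.2]

lemma thriftyVar_eq_of_forall_val_eq (h : ∀ v, G.val I v = G.val I' v) (u : Fin G.n) :
    G.thriftyVar I u = G.thriftyVar I' u :=
  thriftyVar_congr fun v _ => h v

lemma val_congr {u : Fin G.n}
    (h : ∀ x : G.Var k, ReflTransGen G.child (nodeOf x) u → I x = I' x) :
    G.val I u = G.val I' u := by
  induction u using G.wf.induction with
  | _ u ih =>
    have hvar : G.thriftyVar I u = G.thriftyVar I' u := thriftyVar_congr fun v hv =>
      ih v hv fun x hx => h x (hx.tail hv)
    rw [val_eq_apply_thriftyVar, val_eq_apply_thriftyVar, hvar,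
      h _ (by rw [nodeOf_thriftyVar])]

lemma val_update_thriftyVar [DecidableEq (G.Var k)] (I : G.Var k → Fin k) (u : Fin G.n)
    (c : Fin k) : G.val (Function.update I (G.thriftyVar I u) c) u = c := by
  have hbelow : ∀ v, G.child v u → ∀ x, ReflTransGen G.child (nodeOf x) v →
      x ≠ G.thriftyVar I u := by
    rintro v hv x hx rfl
    rw [nodeOf_thriftyVar] at hx
    exact G.wf.transGen.irrefl.irrefl u (TransGen.tail' hx hv)
  have hchildren : ∀ v, G.child v u → G.val (Function.update I (G.thriftyVar I u) c) v =
      G.val I v := fun v hv => val_congr fun x hx => Function.update_of_ne (hbelow v hv x hx) c I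
  rw [val_eq_apply_thriftyVar, thriftyVar_congr hchildren, Function.update_self]

lemma mem_image_thriftyVar {S : Set (Fin G.n)} {x : G.Var k} :
    x ∈ G.thriftyVar I '' S ↔ nodeOf x ∈ S ∧ G.thriftyVar I (nodeOf x) = x := by
  constructor
  · rintro ⟨u, hu, rfl⟩
    simpa using hu
  · exact fun h => ⟨_, h⟩

lemma eq_of_val_eq_of_eqOn {U : Set (Fin G.n)} (hU : ∀ u ∈ U, G.val I u = G.val I' u)
    (hagree : ∀ x, x ∉ G.thriftyVar I '' U → x ∉ G.thriftyVar I' '' U → I x = I' x) :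
    I = I' := by
  have hval : ∀ u, G.val I u = G.val I' u := by
    intro u
    induction u using G.wf.induction with
    | _ u ih =>
      by_cases hu : u ∈ U
      · exact hU u hu
      have hvar := thriftyVar_congr (I := I) (I' := I') fun v hv => ih v hv
      rw [val_eq_apply_thriftyVar, val_eq_apply_thriftyVar, ← hvar]
      refine hagree _ ?_ ?_ <;> rw [mem_image_thriftyVar, nodeOf_thriftyVar] <;>
        exact fun h => hu h.1
  funext x
  by_cases hx : G.thriftyVar I (nodeOf x) = x
  · have hx' : G.thriftyVar I' (nodeOf x) = x := by
      rwa [← thriftyVar_eq_of_forall_val_eq hval]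
    calc I x = G.val I (nodeOf x) := by rw [val_eq_apply_thriftyVar, hx]
      _ = G.val I' (nodeOf x) := hval _
      _ = I' x := by rw [val_eq_apply_thriftyVar, hx']
  · refine hagree x (fun h => hx (mem_image_thriftyVar.1 h).2) fun h => hx ?_
    rw [thriftyVar_eq_of_forall_val_eq hval]
    exact (mem_image_thriftyVar.1 h).2

variable {B : BP (G.Var k) k Bool}

lemma Thrifty.query_eq_thriftyVar (hB : G.Thrifty B) {q : B.State} (hq : B.Visits I q) :
    B.query q = G.thriftyVar I (nodeOf (B.query q)) := by
  rcases hx : B.query q with ⟨u, hu⟩ | ⟨w, a⟩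
  · exact (thriftyVar_of_isLeaf I hu).symm
  · rw [show a = fun v => G.val I v.1 from funext (hB I q w a hq hx)]
    exact (thriftyVar_of_not_isLeaf I w.2).symm

lemma Thrifty.apply_query (hB : G.Thrifty B) {q : B.State} (hq : B.Visits I q) :
    I (B.query q) = G.val I (nodeOf (B.query q)) :=
  (congrArg I (hB.query_eq_thriftyVar hq)).trans (val_eq_apply_thriftyVar I _).symm

lemma Thrifty.val_eq_of_query (hB : G.Thrifty B) {q : B.State} (hq' : B.Visits I' q)
    {p u : Fin G.n} (hp : B.query q = G.thriftyVar I p) (hu : G.child u p) :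
    G.val I u = G.val I' u := by
  have hpl : ¬ G.IsLeaf p := fun h => h u hu
  rw [thriftyVar_of_not_isLeaf I hpl] at hp
  exact hB I' q ⟨p, hpl⟩ _ hq' hp ⟨u, hu⟩

/-- Otherwise changing the variable of `v` would change the value of `v` without changing the
computation up to time `t`. -/
lemma Thrifty.exists_query_child (hk : 2 ≤ k) (hB : G.Thrifty B) {t : ℕ} (ht : B.VisitsAt I t)
    {u v : Fin G.n} (hq : B.query (B.path I t) = G.thriftyVar I u) (hv : G.child v u) :
    ∃ s < t, B.query (B.path I s) = G.thriftyVar I v := by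
  classical
  by_contra! hnone
  have : Nontrivial (Fin k) := Fin.nontrivial_iff_two_le.2 hk
  obtain ⟨c, hc⟩ := exists_ne (G.val I v)
  have hpath := BP.path_update_eq c hnone
  have hvis : B.Visits (Function.update I (G.thriftyVar I v) c) (B.path I t) :=
    hpath t le_rfl ▸ (ht.of_path_eq hpath).visits
  exact hc ((hB.val_eq_of_query hvis hq hv).trans (val_update_thriftyVar I v c)).symm

lemma SolvesDE.out_eq {hk0 : 0 < k} (hB : G.SolvesDE hk0 B) {T : ℕ} (hT : B.HaltsAt I T) :
    B.out (B.path I T) = some (decide (G.val I G.root = ⟨0, hk0⟩)) := by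
  obtain ⟨t, ht, hout⟩ := hB I
  rwa [hT.unique ⟨ht, by simp [hout]⟩]

/-- Otherwise changing the variable of the root would flip the answer without changing the
computation. -/
lemma SolvesDE.exists_query_root (hk : 2 ≤ k) {hk0 : 0 < k} (hB : G.SolvesDE hk0 B) {T : ℕ}
    (hT : B.HaltsAt I T) : ∃ t < T, B.query (B.path I t) = G.thriftyVar I G.root := by
  classical
  by_contra! hnone
  have : Nontrivial (Fin k) := Fin.nontrivial_iff_two_le.2 hk
  obtain ⟨c, hc⟩ : ∃ c : Fin k, (c = ⟨0, hk0⟩ ↔ G.val I G.root ≠ ⟨0, hk0⟩) := by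
    by_cases h0 : G.val I G.root = ⟨0, hk0⟩
    · obtain ⟨c, hc⟩ := exists_ne (⟨0, hk0⟩ : Fin k)
      exact ⟨c, by simp [hc, h0]⟩
    · exact ⟨⟨0, hk0⟩, by simp [h0]⟩
  have hpath := BP.path_update_eq c hnone
  have hT' : B.HaltsAt (Function.update I (G.thriftyVar I G.root) c) T :=
    ⟨hT.1.of_path_eq hpath, by rw [hpath T le_rfl]; exact hT.2⟩
  have hout := hB.out_eq hT'
  rw [hpath T le_rfl, hB.out_eq hT, val_update_thriftyVar] at hout
  simp only [Option.some.injEq, decide_eq_decide] at hout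
  tauto

variable (B)

def QueriedAt (I : G.Var k → Fin k) (T : ℕ) (u : Fin G.n) (t : ℕ) : Prop :=
  t < T ∧ B.query (B.path I t) = G.thriftyVar I u

def ReadAfter (I : G.Var k → Fin k) (T τ : ℕ) (u : Fin G.n) : Prop :=
  ∃ p t, G.child u p ∧ τ ≤ t ∧ QueriedAt B I T p t ∧ ∀ s, τ ≤ s → s < t → ¬ QueriedAt B I T u s

/-- The black pebbling read off the computation of a thrifty program: `u` carries a pebble at
time `t` if its value has been computed before `t` and is still going to be read. -/
def Pebbled (I : G.Var k → Fin k) (T t : ℕ) (u : Fin G.n) : Prop :=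
  (∃ s < t, QueriedAt B I T u s) ∧ ReadAfter B I T t u

variable {B} {T t : ℕ} {u : Fin G.n}

lemma Pebbled.queriedAt_of_not (h : Pebbled B I T (t + 1) u) (h' : ¬ Pebbled B I T t u) :
    QueriedAt B I T u t := by
  by_contra hq
  obtain ⟨⟨s, hs, hqs⟩, p, t', hup, ht', hqp, hfresh⟩ := h
  refine h' ⟨⟨s, lt_of_le_of_ne (Nat.lt_succ_iff.1 hs) (by rintro rfl; exact hq hqs), hqs⟩,
    p, t', hup, by omega, hqp, fun r hr hrt => ?_⟩
  rcases hr.eq_or_lt with rfl | hr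
  · exact hq
  · exact hfresh r hr hrt

lemma Thrifty.pebbled_of_queriedAt (hk : 2 ≤ k) (hB : G.Thrifty B) (hT : B.VisitsAt I T)
    {v : Fin G.n} (hq : QueriedAt B I T u t) (hv : G.child v u) : Pebbled B I T t v := by
  obtain ⟨s, hs, hqs⟩ := hB.exists_query_child hk (hT.mono hq.1.le) hq.2 hv
  exact ⟨⟨s, hs, hs.trans hq.1, hqs⟩, u, t, hv, le_rfl, hq, fun r hr hrt => by omega⟩

lemma ReadAfter.exists_read_lt {τ : ℕ} (hr : ReadAfter B I T τ u) (hq : QueriedAt B I T u t)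
    (ht : τ ≤ t) : ∃ p t', G.child u p ∧ τ ≤ t' ∧ t' < t ∧ QueriedAt B I T p t' := by
  obtain ⟨p, t', hup, hτt', hqp, hfresh⟩ := hr
  refine ⟨p, t', hup, hτt', lt_of_le_of_ne (not_lt.1 fun h => hfresh t ht h hq) ?_, hqp⟩
  rintro rfl
  have hpu := congrArg nodeOf (hqp.2.symm.trans hq.2)
  simp only [nodeOf_thriftyVar] at hpu
  exact G.wf.irrefl.irrefl u (hpu ▸ hup)

end RootedDag

namespace RootedDag

variable {G : RootedDag} {k : ℕ} {I I' : G.Var k → Fin k} {B : BP (G.Var k) k Bool}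
  {T T' τ τ' : ℕ} {S S' : Set (Fin G.n)}

lemma Thrifty.val_eq_of_queriedAt (hB : G.Thrifty B) (hT' : B.VisitsAt I' T') {p u : Fin G.n}
    {t t' : ℕ} (hq : QueriedAt B I T p t) (hpath : B.path I t = B.path I' t') (ht' : t' < T')
    (hu : G.child u p) : G.val I u = G.val I' u :=
  hB.val_eq_of_query (hpath ▸ (hT'.mono ht'.le).visits) hq.2 hu

/-- A variable in which `I` and `I'` may differ is queried only after the value of its node has
been revealed by the query to the parent. -/
lemma Thrifty.apply_query_eq_of_lockstep (hB : G.Thrifty B) (hT : B.VisitsAt I T)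
    (hT' : B.VisitsAt I' T') (hS : ∀ u ∈ S, ReadAfter B I T τ u)
    (hS' : ∀ u ∈ S', ReadAfter B I' T' τ' u)
    (hagree : ∀ x, x ∉ G.thriftyVar I '' S → x ∉ G.thriftyVar I' '' S' → I x = I' x) {s : ℕ}
    (hs : τ + s < T) (hs' : τ' + s < T')
    (hlock : ∀ j ≤ s, B.path I (τ + j) = B.path I' (τ' + j)) :
    I (B.query (B.path I (τ + s))) = I' (B.query (B.path I (τ + s))) := by
  set x := B.query (B.path I (τ + s))
  have hvis := (hT.mono hs.le).visits
  have hvis' : B.Visits I' (B.path I (τ + s)) := by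
    rw [hlock s le_rfl]
    exact (hT'.mono hs'.le).visits
  by_cases hu : nodeOf x ∈ S ∨ nodeOf x ∈ S'
  · rw [hB.apply_query hvis, hB.apply_query hvis']
    rcases hu with hu | hu
    · obtain ⟨p, t, hup, hτt, hts, hqp⟩ :=
        (hS _ hu).exists_read_lt ⟨hs, hB.query_eq_thriftyVar hvis⟩ (by omega)
      obtain ⟨j, rfl⟩ := Nat.exists_eq_add_of_le hτt
      exact hB.val_eq_of_queriedAt hT' hqp (hlock j (by omega)) (by omega) hup
    · have hq : QueriedAt B I' T' (nodeOf x) (τ' + s) := by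
        refine ⟨hs', ?_⟩
        rw [← hlock s le_rfl]
        exact hB.query_eq_thriftyVar hvis'
      obtain ⟨p, t, hup, hτt, hts, hqp⟩ := (hS' _ hu).exists_read_lt hq (by omega)
      obtain ⟨j, rfl⟩ := Nat.exists_eq_add_of_le hτt
      exact (hB.val_eq_of_queriedAt hT hqp (hlock j (by omega)).symm (by omega) hup).symm
  · rw [not_or] at hu
    exact hagree x (fun h => hu.1 (mem_image_thriftyVar.1 h).1)
      fun h => hu.2 (mem_image_thriftyVar.1 h).1

/-- From the common state both computations run in lockstep up to a common halting step, and
on the way the values of the nodes of `S` and `S'` are revealed by the queries to their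
parents. -/
theorem Thrifty.eq_of_path_eq (hB : G.Thrifty B) (hT : B.HaltsAt I T) (hT' : B.HaltsAt I' T')
    (hτ : τ ≤ T) (hτ' : τ' ≤ T') (hS : ∀ u ∈ S, ReadAfter B I T τ u)
    (hS' : ∀ u ∈ S', ReadAfter B I' T' τ' u)
    (hagree : ∀ x, x ∉ G.thriftyVar I '' S → x ∉ G.thriftyVar I' '' S' → I x = I' x)
    (hpath : B.path I τ = B.path I' τ') : I = I' := by
  have hlock := BP.path_add_eq_of_forall (n := min (T - τ) (T' - τ')) hpath fun s hs hlock =>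
    hB.apply_query_eq_of_lockstep hT.1 hT'.1 hS hS' hagree (by omega) (by omega) hlock
  have hlen : T - τ = T' - τ' := by
    by_contra hne
    rcases Nat.lt_or_gt_of_ne hne with hlt | hlt
    · refine hT.path_ne hT'.1 (s := τ' + (T - τ)) (by omega) ?_
      rw [← hlock _ (by omega), Nat.add_sub_cancel' hτ]
    · refine hT'.path_ne hT.1 (s := τ + (T' - τ')) (by omega) ?_
      rw [hlock _ (by omega), Nat.add_sub_cancel' hτ']
  refine eq_of_val_eq_of_eqOn (U := S ∪ S') ?_ fun x hx hx' =>
    hagree x (fun h => hx (Set.image_mono Set.subset_union_left h))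
      fun h => hx' (Set.image_mono Set.subset_union_right h)
  rintro u (hu | hu)
  · obtain ⟨p, t, hup, hτt, hq, -⟩ := hS u hu
    obtain ⟨j, rfl⟩ := Nat.exists_eq_add_of_le hτt
    have := hq.1
    exact hB.val_eq_of_queriedAt hT'.1 hq (hlock j (by omega)) (by omega) hup
  · obtain ⟨p, t, hup, hτt, hq, -⟩ := hS' u hu
    obtain ⟨j, rfl⟩ := Nat.exists_eq_add_of_le hτt
    have := hq.1
    exact (hB.val_eq_of_queriedAt hT.1 hq (hlock j (by omega)).symm (by omega) hup).symm

open Classical in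
noncomputable def override (I : G.Var k → Fin k) (S : Finset (Fin G.n)) (c : S → Fin k) :
    G.Var k → Fin k := fun x =>
  if hx : x ∈ G.thriftyVar I '' S then c ⟨nodeOf x, (mem_image_thriftyVar.1 hx).1⟩ else I x

lemma override_of_notMem {S : Finset (Fin G.n)} {c : S → Fin k} {x : G.Var k}
    (hx : x ∉ G.thriftyVar I '' S) : override I S c x = I x := dif_neg hx

lemma override_thriftyVar {S : Finset (Fin G.n)} (c : S → Fin k) (u : S) :
    override I S c (G.thriftyVar I u) = c u := by
  rw [override, dif_pos ⟨u, u.2, rfl⟩]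
  exact congrArg c (Subtype.ext (nodeOf_thriftyVar I u))

theorem Thrifty.injective_override (hB : G.Thrifty B) {h : ℕ}
    {T τ : (G.Var k → Fin k) → ℕ} {S : (G.Var k → Fin k) → Finset (Fin G.n)}
    (e : ∀ I, S I ≃ Fin h) (hT : ∀ I, B.HaltsAt I (T I)) (hτ : ∀ I, τ I ≤ T I)
    (hS : ∀ I, ∀ u ∈ S I, ReadAfter B I (T I) (τ I) u) :
    Function.Injective fun p : (Fin h → Fin k) × (G.Var k → Fin k) =>
      (B.path p.2 (τ p.2), override p.2 (S p.2) (p.1 ∘ e p.2)) := by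
  rintro ⟨c, I⟩ ⟨c', I'⟩ heq
  simp only [Prod.mk.injEq] at heq
  obtain ⟨hpath, hover⟩ := heq
  have hagree : ∀ x, x ∉ G.thriftyVar I '' ↑(S I) → x ∉ G.thriftyVar I' '' ↑(S I') →
      I x = I' x := fun x hx hx' => by
    simpa [override_of_notMem hx, override_of_notMem hx'] using congrFun hover x
  obtain rfl : I = I' :=
    hB.eq_of_path_eq (hT I) (hT I') (hτ I) (hτ I') (hS I) (hS I') hagree hpath
  have hc : c ∘ e I = c' ∘ e I := funext fun u => by
    simpa [override_thriftyVar] using congrFun hover (G.thriftyVar I u)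
  rw [(e I).surjective.injective_comp_right hc]

end RootedDag

namespace RootedDag

open Pebbling

variable {h k : ℕ} {G : RootedDag}

lemma root_eq_zero (hchild : ∀ v u : Fin G.n, G.child v u ↔
      ((v : ℕ) = 2 * (u : ℕ) + 1 ∨ (v : ℕ) = 2 * (u : ℕ) + 2)) : (G.root : ℕ) = 0 := by
  by_contra hne
  obtain ⟨w, hw⟩ := G.root_unique ⟨0, G.root.pos⟩ fun h => hne (by rw [← h])
  have := (hchild _ _).1 hw
  simp only at this
  omega

open Classical in
/-- The pebbled nodes at time `t`, in the heap numbering of `Pebbling.InSubtree`. -/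
noncomputable def pebbleConfig (B : BP (G.Var k) k Bool) (I : G.Var k → Fin k) (T t : ℕ) :
    Finset ℕ :=
  (univ.filter (Pebbled B I T t)).image fun u : Fin G.n => (u : ℕ) + 1

variable {B : BP (G.Var k) k Bool} {I : G.Var k → Fin k} {T : ℕ}

lemma mem_pebbleConfig {t q : ℕ} :
    q ∈ pebbleConfig B I T t ↔ ∃ u : Fin G.n, Pebbled B I T t u ∧ (u : ℕ) + 1 = q := by
  simp [pebbleConfig]

variable (hn : G.n = 2 ^ h - 1) (hchild : ∀ v u : Fin G.n, G.child v u ↔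
      ((v : ℕ) = 2 * (u : ℕ) + 1 ∨ (v : ℕ) = 2 * (u : ℕ) + 2))
include hn hchild

lemma isLegal_pebbleConfig (hk : 2 ≤ k) (hB : G.Thrifty B) (hT : B.VisitsAt I T) {m c : ℕ}
    (hc : (c + 1) * 2 ^ m ≤ 2 ^ h) : IsLegal (pebbleConfig B I T) m c := by
  intro t q hq hqt hqt1
  obtain ⟨u, hu, rfl⟩ := mem_pebbleConfig.1 hqt1
  have hqu := hu.queriedAt_of_not fun hu' => hqt (mem_pebbleConfig.2 ⟨u, hu', rfl⟩)
  have hlt : 2 * ((u : ℕ) + 1) < 2 ^ h := hq.two_mul_lt.trans_le hc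
  obtain ⟨h', rfl⟩ : ∃ h', h = h' + 1 := ⟨h - 1, by cases h <;> simp_all⟩
  rw [pow_succ] at hlt hn
  have hpebbled : ∀ (v : Fin G.n), ((v : ℕ) = 2 * u + 1 ∨ (v : ℕ) = 2 * u + 2) →
      (v : ℕ) + 1 ∈ pebbleConfig B I T t := fun v hv =>
    mem_pebbleConfig.2 ⟨v, hB.pebbled_of_queriedAt hk hT hqu ((hchild v u).2 hv), rfl⟩
  exact ⟨by simpa [Nat.mul_add] using hpebbled ⟨2 * u + 1, by omega⟩ (Or.inl rfl),
    by simpa [Nat.mul_add, add_assoc] using hpebbled ⟨2 * u + 2, by omega⟩ (Or.inr rfl)⟩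

open Classical in
/-- The configurations `pebbleConfig` form a black pebbling of the tree in which both children
of the root get pebbled. -/
lemma exists_card_pebbled_ge (hh : 2 ≤ h) (hk : 2 ≤ k) (hB : G.Thrifty B) {hk0 : 0 < k}
    (hsolve : G.SolvesDE hk0 B) (hT : B.HaltsAt I T) :
    ∃ τ ≤ T, h ≤ #{u | Pebbled B I T τ u} := by
  obtain ⟨m, rfl⟩ : ∃ m, h = m + 2 := ⟨h - 2, by omega⟩
  have hpow : 2 ^ (m + 2) = 4 * 2 ^ m := by ring
  obtain ⟨t, htT, hq⟩ := hsolve.exists_query_root hk hT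
  have hroot := root_eq_zero hchild
  have hchild_pebbled : ∀ (v : Fin G.n), (v : ℕ) = 1 ∨ (v : ℕ) = 2 →
      (v : ℕ) + 1 ∈ pebbleConfig B I T t := fun v hv =>
    mem_pebbleConfig.2
      ⟨v, hB.pebbled_of_queriedAt hk hT.1 ⟨htT, hq⟩ ((hchild _ _).2 (by omega)), rfl⟩
  have hlegal : ∀ c ≤ 3, IsLegal (pebbleConfig B I T) m c := fun c hc =>
    isLegal_pebbleConfig hn hchild hk hB hT.1 <| by
      rw [hpow]; exact Nat.mul_le_mul_right _ (by omega)
  obtain ⟨τ, -, hτt, hcard⟩ := exists_card_children_ge (pebblesNeeded _ m) (p := 1) one_pos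
    (hlegal 2 (by omega)) (hlegal 3 (by omega)) (Nat.zero_le t)
    (fun q _ hq => by obtain ⟨u, ⟨⟨s, hs, -⟩, -⟩, -⟩ := mem_pebbleConfig.1 hq; omega)
    (hchild_pebbled ⟨1, by omega⟩ (Or.inl rfl)) (hchild_pebbled ⟨2, by omega⟩ (Or.inr rfl))
  exact ⟨τ, by omega, hcard.trans ((card_filter_le _ _).trans card_image_le)⟩

end RootedDag

/-- For any `h, k ≥ 2`, every deterministic thrifty `k`-way branching program solving the
Tree Evaluation Problem on the complete binary tree of height `h` (with `2^h - 1` nodes in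
heap order) has at least `k^h` states. -/
theorem stmt9 (h k : ℕ) (hh : 2 ≤ h) (hk : 2 ≤ k)
    (G : RootedDag) (hn : G.n = 2 ^ h - 1)
    (hchild : ∀ v u : Fin G.n, G.child v u ↔
      ((v : ℕ) = 2 * (u : ℕ) + 1 ∨ (v : ℕ) = 2 * (u : ℕ) + 2))
    (B : BP (G.Var k) k Bool)
    (hsolve : G.SolvesDE (by omega) B) (hthrifty : G.Thrifty B) :
    k ^ h ≤ B.size := by
  classical
  choose T hT using BP.Computes.exists_haltsAt hsolve
  choose τ hτ hpebbled using fun I =>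
    RootedDag.exists_card_pebbled_ge hn hchild hh hk hthrifty hsolve (hT I)
  choose S hS hcard using fun I => Finset.exists_subset_card_eq (hpebbled I)
  have hinj := hthrifty.injective_override (fun I => (S I).equivFinOfCardEq (hcard I)) hT hτ
    fun I u hu => (Finset.mem_filter.1 (hS I hu)).2.2
  let := B.finState
  have : Finite (G.Var k) := by unfold RootedDag.Var; infer_instance
  have : Nonempty (G.Var k → Fin k) := ⟨fun _ => ⟨0, by omega⟩⟩
  have hle := pow_le_card_of_injective hinj
  rwa [Nat.card_eq_fintype_card] at hle
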